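/- arXiv:1702.05797 — 3 statements merged into one kernel-verified Lean document; each statement's English description precedes it below -/
import Mathlib

section
/- Let V be a finite vertex set, p ∈ (0,1), q > 0 a real number, and α ∈ (0,1). Let ω be a random edge configuration on V distributed according to the FK measure on V with edge probability p and cluster weight q. Independently color each cluster of ω red with probability α, and let R be the set of all red vertices. Then, conditionally on R, the restriction of ω to edges within R and the restriction of ω to edges within V∖R are independent, with ω restricted to R distributed according to the FK measure on R with edge probability p and cluster weight αq, and ω restricted to V∖R distributed according to the FK measure on V∖R with edge probability p and cluster weight (1−α)q. -/
open scoped Classical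

noncomputable section

/-- The type of potential edges (unordered pairs of distinct vertices) on vertex set `V`. -/
abbrev EdgeT (V : Type*) := {e : Sym2 V // ¬ e.IsDiag}

/-- An edge configuration on vertex set `V`: a set of edges of the complete graph on `V`. -/
abbrev Conf (V : Type*) [DecidableEq V] := Finset (EdgeT V)

variable {V : Type*} [DecidableEq V]

/-- The graph associated to an edge configuration. -/
def graphOf (ω : Conf V) : SimpleGraph V :=
  SimpleGraph.fromEdgeSet (Subtype.val '' (ω : Set (EdgeT V)))

/-- The size of the cluster (connected component) of the vertex `x`. -/
def clusterSize (ω : Conf V) (x : V) : ℕ :=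
  Nat.card {y | (graphOf ω).Reachable x y}

/-- The number of clusters (connected components) of an edge configuration. -/
def numClusters (ω : Conf V) : ℕ :=
  Nat.card (graphOf ω).ConnectedComponent

/-- The number of clusters of `ω` meeting the vertex set `A`. -/
def numClustersIn (ω : Conf V) (A : Set V) : ℕ :=
  Nat.card {C : (graphOf ω).ConnectedComponent | ∃ x ∈ A, (graphOf ω).connectedComponentMk x = C}

variable [Fintype V]

/-- `ℒ₁(ω)`: the size of the largest cluster. -/
def L1 (ω : Conf V) : ℕ :=
  Finset.univ.sup (fun x => clusterSize ω x)

/-- `|S_M(ω)|`: the number of vertices in clusters of size larger than `M`. -/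
def SMcard (ω : Conf V) (M : ℝ) : ℕ :=
  (Finset.univ.filter (fun x => (clusterSize ω x : ℝ) > M)).card

/-- `|S_M(ω) ∖ 𝒞₁(ω)|`: the number of vertices in clusters of size larger than `M`,
excluding a largest cluster.  (If the largest cluster has size `> M` it is contained
in `S_M`, so this number is `|S_M| - ℒ₁`; otherwise it is `|S_M|`.) -/
def SMminusC1card (ω : Conf V) (M : ℝ) : ℕ :=
  if (L1 ω : ℝ) > M then SMcard ω M - L1 ω else SMcard ω M

/-- The FK (random-cluster) weight of a configuration, with edge probability `p`
and cluster weight `q`. -/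
def fkWeight (V : Type*) [DecidableEq V] [Fintype V] (p q : ℝ) (ω : Conf V) : ℝ :=
  p ^ ω.card * (1 - p) ^ (Fintype.card (EdgeT V) - ω.card) * q ^ numClusters ω

/-- The probability of the event `A` under the (normalized) weight function `w`. -/
def probOf {Ω : Type*} [Fintype Ω] (w : Ω → ℝ) (A : Set Ω) : ℝ :=
  (∑ x ∈ Finset.univ.filter (· ∈ A), w x) / (∑ x, w x)

/-- Conditional probability of `A` given `B` under the weight function `w`. -/
def condProbOf {Ω : Type*} [Fintype Ω] (w : Ω → ℝ) (A B : Set Ω) : ℝ :=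
  probOf w (A ∩ B) / probOf w B

/-- The mean-field FK measure `π_{n,λ,q}` (with `p = λ/n`), evaluated on the event `A`. -/
def fkProb (n : ℕ) (p q : ℝ) (A : Set (Conf (Fin n))) : ℝ :=
  probOf (fkWeight (Fin n) p q) A

/-- `λ_S = q`. -/
def lambdaS (q : ℝ) : ℝ := q

/-- `λ_c = 2(q-1)log(q-1)/(q-2)`. -/
def lambdac (q : ℝ) : ℝ := 2 * (q - 1) * Real.log (q - 1) / (q - 2)

/-- `λ_s = min_{z ≥ 0} { z + qz/(eᶻ - 1) }` (the infimum over `z > 0` of the natural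
continuous extension). -/
def lambdas (q : ℝ) : ℝ := sInf ((fun z => z + q * z / (Real.exp z - 1)) '' Set.Ioi 0)

/-- `θ_λ`: the unique positive root of `e^{-λx} = 1 - x` for `λ > 1` (and `0` for `λ ≤ 1`,
where the set of positive roots is empty and `sSup ∅ = 0`). -/
def thetaRoot (lam : ℝ) : ℝ := sSup {x : ℝ | 0 < x ∧ Real.exp (-lam * x) = 1 - x}

/-- `Θ_r(λ,q)`: the largest solution of `e^{-λx} = 1 - qx/(1+(q-1)x)`. -/
def ThetaR (lam q : ℝ) : ℝ :=
  sSup {x : ℝ | Real.exp (-lam * x) = 1 - q * x / (1 + (q - 1) * x)}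

/-- `t`-step transition probabilities of the transition kernel `P`. -/
def kernelPow {Ω : Type*} [Fintype Ω] [DecidableEq Ω] (P : Ω → Ω → ℝ) : ℕ → Ω → Ω → ℝ
  | 0 => fun x y => if x = y then 1 else 0
  | t + 1 => fun x y => ∑ z, kernelPow P t x z * P z y

/-- Total variation distance between two (signed) distributions. -/
def tvDist {Ω : Type*} [Fintype Ω] (μ ν : Ω → ℝ) : ℝ := (∑ x, |μ x - ν x|) / 2

/-- The distribution obtained by normalizing the weight function `w`. -/
def statDist {Ω : Type*} [Fintype Ω] (w : Ω → ℝ) : Ω → ℝ := fun x => w x / ∑ y, w y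

/-- The mixing time `t_mix = min { t : max_x ‖Pᵗ(x,·) - π‖_TV < 1/(2e) }`. -/
def mixingTime {Ω : Type*} [Fintype Ω] [DecidableEq Ω] (P : Ω → Ω → ℝ) (π : Ω → ℝ) : ℕ :=
  sInf {t : ℕ | ∀ x, tvDist (kernelPow P t x) π < 1 / (2 * Real.exp 1)}

/-- The mean-field Potts weight: `σ ↦ exp((β/n)·#{i<j : σ_i = σ_j})` where
`β/n = -log(1 - λ/n)`, i.e. `λ/n = 1 - e^{-β/n}`. -/
def pottsWeight (n q : ℕ) (lam : ℝ) (σ : Fin n → Fin q) : ℝ :=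
  Real.exp (-(Real.log (1 - lam / n)) *
    ((Finset.univ.filter (fun ij : Fin n × Fin n => ij.1 < ij.2 ∧ σ ij.1 = σ ij.2)).card))

/-- The number of sites of color `r` in the Potts configuration `σ`. -/
def colorCount {n q : ℕ} (σ : Fin n → Fin q) (r : Fin q) : ℕ :=
  (Finset.univ.filter (fun i => σ i = r)).card

/-- A function on vertices is constant on each cluster of `ω`. -/
def constOnClusters {γ : Type*} (ω : Conf V) (f : V → γ) : Prop :=
  ∀ x y, (graphOf ω).Reachable x y → f x = f y

/-- The monochromatic edges of a Potts configuration. -/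
def monoEdges {n q : ℕ} (σ : Fin n → Fin q) : Finset (EdgeT (Fin n)) :=
  Finset.univ.filter (fun e => ∀ x ∈ e.1, ∀ y ∈ e.1, σ x = σ y)

/-- Transition kernel of the Swendsen–Wang dynamics for the mean-field `q`-state
Potts model: retain each monochromatic edge independently with probability `p`, then
recolor each cluster with an independent uniform color. -/
def swKernel (n q : ℕ) (p : ℝ) (σ σ' : Fin n → Fin q) : ℝ :=
  ∑ ω ∈ (monoEdges σ).powerset,
    p ^ ω.card * (1 - p) ^ ((monoEdges σ).card - ω.card) *
      (if constOnClusters ω σ' then ((1 : ℝ) / q) ^ numClusters ω else 0)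

/-- Transition kernel of heat-bath Glauber dynamics for the mean-field FK model:
a uniformly random edge is resampled from its conditional distribution given the rest. -/
def glauberKernel (n : ℕ) (p q : ℝ) (ω ω' : Conf (Fin n)) : ℝ :=
  (1 / (Fintype.card (EdgeT (Fin n)) : ℝ)) * ∑ e : EdgeT (Fin n),
    if ω'.erase e = ω.erase e then
      fkWeight (Fin n) p q ω' /
        (fkWeight (Fin n) p q (insert e (ω'.erase e)) + fkWeight (Fin n) p q (ω'.erase e))
    else 0

/-- The edge `e` has both endpoints in the vertex set `A`. -/
def edgeInside (A : Set V) (e : EdgeT V) : Prop := ∀ x ∈ e.1, x ∈ A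

/-- Transition kernel of the Chayes–Machta dynamics for the mean-field FK model:
each cluster is activated independently with probability `1/q`, and every edge with
both endpoints in active clusters is resampled with probability `p`. -/
def cmKernel (n : ℕ) (p q : ℝ) (ω ω' : Conf (Fin n)) : ℝ :=
  ∑ A ∈ (Finset.univ : Finset (Fin n)).powerset,
    if (∀ x ∈ A, ∀ y : Fin n, (graphOf ω).Reachable x y → y ∈ A) ∧
       (∀ e : EdgeT (Fin n), ¬ edgeInside (↑A) e → (e ∈ ω' ↔ e ∈ ω)) then
      (1 / q) ^ numClustersIn ω (↑A) * (1 - 1 / q) ^ numClustersIn ω ((↑A : Set (Fin n))ᶜ) *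
      p ^ (ω'.filter (fun e => edgeInside (↑A : Set (Fin n)) e)).card *
      (1 - p) ^ ((Finset.univ.filter (fun e : EdgeT (Fin n) => edgeInside (↑A : Set (Fin n)) e)).card
            - (ω'.filter (fun e => edgeInside (↑A : Set (Fin n)) e)).card)
    else 0

/-- The restriction of an edge configuration on `V` to the vertex subset `R`. -/
def restrictConf (R : Finset V) (ω : Conf V) : Conf ↥R :=
  Finset.univ.filter (fun e : EdgeT ↥R => ∃ e' ∈ ω, e'.1 = Sym2.map Subtype.val e.1)

/-- Weight of a red/blue coloring of the clusters of `ω`: each cluster is red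
independently with probability `α`. -/
def colorWeight (ω : Conf V) (α : ℝ) (c : V → Bool) : ℝ :=
  if constOnClusters ω c then
    α ^ numClustersIn ω {x | c x = true} * (1 - α) ^ numClustersIn ω {x | c x = false}
  else 0

/-- The set of red vertices of a coloring. -/
def redSet (c : V → Bool) : Finset V := Finset.univ.filter (fun x => c x = true)

/-- The mean-field Potts drift function
`F_λ(z) = z·θ_{λz} + (1/q)(1 - z·θ_{λz})` for `z > 1/λ`, and `1/q` for `z ≤ 1/λ`. -/
def Fdrift (q : ℕ) (lam : ℝ) (z : ℝ) : ℝ :=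
  if 1 / lam < z then
    z * thetaRoot (lam * z) + ((1 : ℝ) / q) * (1 - z * thetaRoot (lam * z))
  else (1 : ℝ) / q

/-- `a_λ`: the largest fixed point of `F_λ`. -/
def aFix (q : ℕ) (lam : ℝ) : ℝ := sSup {a : ℝ | Fdrift q lam a = a}

/-- `f(θ) = θ_{λ(1+(q-1)θ)/q}`, the Chayes–Machta drift of the giant component. -/
def fdrift (q lam θ : ℝ) : ℝ := thetaRoot (lam * (1 + (q - 1) * θ) / q)

/-- `g(θ) = f(θ) - θ`. -/
def gdrift (q lam θ : ℝ) : ℝ := fdrift q lam θ - θ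

/-- `Θ_min = max{0, (q-λ)/(λ(q-1))}`. -/
def ThetaMin (q lam : ℝ) : ℝ := max 0 ((q - lam) / (lam * (q - 1)))

/-- `Θ*`: the smaller of the two roots of `g` in `(Θ_min, 1]`. -/
def ThetaStar (q lam : ℝ) : ℝ :=
  sInf {θ : ℝ | θ ∈ Set.Ioc (ThetaMin q lam) 1 ∧ gdrift q lam θ = 0}

end

/-! Once the red set is `R`, the coloring is the indicator `1_R`, whose weight vanishes unless
it is constant on clusters, i.e. unless `ω` has no edge between `R` and `Rᶜ`. Such `ω` are
exactly the unions of a configuration `ω_R` on `R` and one `ω_{Rᶜ}` on `Rᶜ`; their edges and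
clusters add up, the clusters meeting `R` being those of `ω_R`. Writing `φ_{U,p,q'}` for the FK
weight on `U`, the joint weight of `(ω, 1_R)` therefore factors as
`(1 - p)^{#cross} · φ_{R,p,αq}(ω_R) · φ_{Rᶜ,p,(1-α)q}(ω_{Rᶜ})`, the constant accounting for
the closed edges between `R` and `Rᶜ`, so conditioning on `R` leaves a product measure. -/

namespace SimpleGraph

variable {V : Type*} {G : SimpleGraph V}

lemma Reachable.apply_eq_of_forall_adj {γ : Type*} {f : V → γ}
    (hf : ∀ x y, G.Adj x y → f x = f y) {x y : V} (h : G.Reachable x y) : f x = f y := by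
  obtain ⟨w⟩ := h
  induction w with
  | nil => rfl
  | cons hadj _ ih => exact (hf _ _ hadj).trans ih

variable {S : Set V}

lemma reachable_induce_iff (hS : ∀ x y, G.Reachable x y → (x ∈ S ↔ y ∈ S)) {x y : S} :
    (G.induce S).Reachable x y ↔ G.Reachable x y := by
  refine ⟨fun h => h.map (Embedding.induce S).toHom, fun ⟨w⟩ => ?_⟩
  have hw : ∀ v ∈ w.support, v ∈ S := fun v hv => (hS _ _ ⟨w.takeUntil v hv⟩).1 x.2
  exact ⟨w.induce S hw⟩

lemma card_connectedComponent_induce (hS : ∀ x y, G.Reachable x y → (x ∈ S ↔ y ∈ S)) :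
    Nat.card (G.induce S).ConnectedComponent =
      Nat.card {C : G.ConnectedComponent | ∃ x ∈ S, G.connectedComponentMk x = C} := by
  set f := ConnectedComponent.map (Embedding.induce (G := G) S).toHom
  have hf : Function.Injective f := by
    intro C D h
    induction C using ConnectedComponent.ind with | h x
    induction D using ConnectedComponent.ind with | h y
    exact ConnectedComponent.sound ((reachable_induce_iff hS).2 (ConnectedComponent.exact h))
  rw [← Nat.card_range_of_injective hf]
  congr
  ext C
  constructor
  · rintro ⟨D, rfl⟩
    induction D using ConnectedComponent.ind with | h x
    exact ⟨x, x.2, rfl⟩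
  · rintro ⟨x, hx, rfl⟩
    exact ⟨(G.induce S).connectedComponentMk ⟨x, hx⟩, rfl⟩

lemma card_connectedComponent_eq_add [Finite V]
    (hS : ∀ x y, G.Reachable x y → (x ∈ S ↔ y ∈ S)) :
    Nat.card G.ConnectedComponent =
      Nat.card {C : G.ConnectedComponent | ∃ x ∈ S, G.connectedComponentMk x = C} +
      Nat.card {C : G.ConnectedComponent | ∃ x ∈ Sᶜ, G.connectedComponentMk x = C} := by
  have hcompl : {C : G.ConnectedComponent | ∃ x ∈ Sᶜ, G.connectedComponentMk x = C} =
      {C | ∃ x ∈ S, G.connectedComponentMk x = C}ᶜ := by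
    ext C
    induction C using ConnectedComponent.ind with | h y
    simp only [Set.mem_ofPred_eq, Set.mem_compl_iff, ConnectedComponent.eq, not_exists, not_and]
    constructor
    · rintro ⟨x, hx, hxy⟩ z hz hzy
      exact hx ((hS _ _ (hxy.trans hzy.symm)).2 hz)
    · intro h
      exact ⟨y, fun hy => h y hy .rfl, .rfl⟩
  rw [hcompl, Nat.card_coe_set_eq, Nat.card_coe_set_eq, Set.ncard_add_ncard_compl]

end SimpleGraph

section Configurations

variable {V : Type*}

def liftEdge (S : Finset V) : EdgeT S ↪ EdgeT V where
  toFun e := ⟨e.1.map Subtype.val, (Sym2.isDiag_map Subtype.val_injective).not.2 e.2⟩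
  inj' _ _ h := Subtype.ext (Sym2.map.injective Subtype.val_injective (congrArg Subtype.val h))

@[simp]
lemma liftEdge_val (S : Finset V) (e : EdgeT S) : (liftEdge S e).1 = e.1.map Subtype.val := rfl

lemma exists_liftEdge_eq_iff {S : Finset V} {e : EdgeT V} :
    (∃ f, liftEdge S f = e) ↔ edgeInside (↑S) e := by
  constructor
  · rintro ⟨f, rfl⟩ x hx
    obtain ⟨a, -, rfl⟩ := Sym2.mem_map.1 hx
    exact a.2
  · obtain ⟨z, hz⟩ := e
    induction z using Sym2.ind with | h x y
    intro h
    have hx : x ∈ S := h x (Sym2.mem_mk_left x y)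
    have hy : y ∈ S := h y (Sym2.mem_mk_right x y)
    refine ⟨⟨s(⟨x, hx⟩, ⟨y, hy⟩), fun hd => hz ?_⟩, rfl⟩
    exact (Sym2.isDiag_map Subtype.val_injective).2 hd

variable [DecidableEq V]

lemma liftEdge_ne_liftEdge_compl [Fintype V] {R : Finset V} (e : EdgeT R) (f : EdgeT ↥Rᶜ) :
    liftEdge R e ≠ liftEdge Rᶜ f := by
  intro h
  have hR := exists_liftEdge_eq_iff.1 ⟨e, rfl⟩ _ (Sym2.out_fst_mem (liftEdge R e).1)
  have hRc := exists_liftEdge_eq_iff.1 ⟨f, h.symm⟩ _ (Sym2.out_fst_mem (liftEdge R e).1)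
  exact Finset.mem_compl.1 hRc hR

lemma mem_restrictConf {S : Finset V} {ω : Conf V} {e : EdgeT S} :
    e ∈ restrictConf S ω ↔ liftEdge S e ∈ ω := by
  simp only [restrictConf, Finset.mem_filter, Finset.mem_univ, true_and]
  constructor
  · rintro ⟨e', he', h⟩
    rwa [show liftEdge S e = e' from Subtype.ext h.symm]
  · exact fun h => ⟨_, h, rfl⟩

lemma graphOf_adj {ω : Conf V} {x y : V} :
    (graphOf ω).Adj x y ↔ (∃ e ∈ ω, e.1 = s(x, y)) ∧ x ≠ y := by
  simp [graphOf, SimpleGraph.fromEdgeSet_adj]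

lemma graphOf_restrictConf (S : Finset V) (ω : Conf V) :
    graphOf (restrictConf S ω) = (graphOf ω).induce ↑S := by
  ext x y
  rw [SimpleGraph.comap_adj, graphOf_adj, graphOf_adj, Function.Embedding.subtype_apply,
    Function.Embedding.subtype_apply, Subtype.val_injective.ne_iff]
  refine and_congr_left fun hxy => ⟨?_, ?_⟩
  · rintro ⟨e, he, hexy⟩
    exact ⟨liftEdge S e, mem_restrictConf.1 he, by rw [liftEdge_val, hexy, Sym2.map_mk]⟩
  · rintro ⟨e, he, hexy⟩
    refine ⟨⟨s(x, y), by simpa using hxy⟩, mem_restrictConf.2 ?_, rfl⟩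
    convert he
    exact Subtype.ext hexy.symm

lemma constOnClusters_iff_adj {γ : Type*} {ω : Conf V} {f : V → γ} :
    constOnClusters ω f ↔ ∀ x y, (graphOf ω).Adj x y → f x = f y :=
  ⟨fun h x y hxy => h x y hxy.reachable,
    fun h _ _ => SimpleGraph.Reachable.apply_eq_of_forall_adj h⟩

lemma graphOf_reachable_of_mem {ω : Conf V} {e : EdgeT V} (he : e ∈ ω) {x y : V}
    (hx : x ∈ e.1) (hy : y ∈ e.1) : (graphOf ω).Reachable x y := by
  obtain ⟨z, hz⟩ := e
  induction z using Sym2.ind with | h a b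
  have hab : (graphOf ω).Reachable a b :=
    (graphOf_adj.2 ⟨⟨_, he, rfl⟩, fun h => hz (Sym2.mk_isDiag_iff.2 h)⟩).reachable
  rcases Sym2.mem_iff.1 hx with rfl | rfl <;> rcases Sym2.mem_iff.1 hy with rfl | rfl
  exacts [.rfl, hab, hab.symm, .rfl]

end Configurations

section Decomposition

variable {V : Type*} [DecidableEq V] [Fintype V] (R : Finset V)

def joinConf (ω₁ : Conf R) (ω₂ : Conf ↥Rᶜ) : Conf V :=
  ω₁.map (liftEdge R) ∪ ω₂.map (liftEdge Rᶜ)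

variable {R}

lemma restrictConf_joinConf_left (ω₁ : Conf R) (ω₂ : Conf ↥Rᶜ) :
    restrictConf R (joinConf R ω₁ ω₂) = ω₁ := by
  ext e
  simp [mem_restrictConf, joinConf, (liftEdge_ne_liftEdge_compl _ _).symm]

lemma restrictConf_joinConf_right (ω₁ : Conf R) (ω₂ : Conf ↥Rᶜ) :
    restrictConf Rᶜ (joinConf R ω₁ ω₂) = ω₂ := by
  ext e
  simp [mem_restrictConf, joinConf, liftEdge_ne_liftEdge_compl]

lemma card_joinConf (ω₁ : Conf R) (ω₂ : Conf ↥Rᶜ) :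
    (joinConf R ω₁ ω₂).card = ω₁.card + ω₂.card := by
  rw [joinConf, Finset.card_union_of_disjoint, Finset.card_map, Finset.card_map]
  simp only [Finset.disjoint_left, Finset.mem_map]
  rintro _ ⟨f, -, rfl⟩ ⟨g, -, hg⟩
  exact liftEdge_ne_liftEdge_compl f g hg.symm

lemma constOnClusters_joinConf (ω₁ : Conf R) (ω₂ : Conf ↥Rᶜ) :
    constOnClusters (joinConf R ω₁ ω₂) fun x => decide (x ∈ R) := by
  rw [constOnClusters_iff_adj]
  intro x y hxy
  obtain ⟨⟨e, he, hexy⟩, -⟩ := graphOf_adj.1 hxy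
  have hx : x ∈ e.1 := hexy ▸ Sym2.mem_mk_left x y
  have hy : y ∈ e.1 := hexy ▸ Sym2.mem_mk_right x y
  simp only [joinConf, Finset.mem_union, Finset.mem_map] at he
  rcases he with ⟨f, -, rfl⟩ | ⟨f, -, rfl⟩
  · have h := exists_liftEdge_eq_iff.1 ⟨f, rfl⟩
    simp [Finset.mem_coe.1 (h x hx), Finset.mem_coe.1 (h y hy)]
  · have h := exists_liftEdge_eq_iff.1 ⟨f, rfl⟩
    simp [Finset.mem_compl.1 (h x hx), Finset.mem_compl.1 (h y hy)]

lemma edgeInside_or_edgeInside_compl {ω : Conf V}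
    (hω : constOnClusters ω fun x => decide (x ∈ R)) {e : EdgeT V} (he : e ∈ ω) :
    edgeInside (↑R) e ∨ edgeInside (↑Rᶜ) e := by
  have hsame : ∀ x ∈ e.1, (x ∈ R ↔ e.1.out.1 ∈ R) := fun x hx => by
    simpa using hω _ _ (graphOf_reachable_of_mem he hx (Sym2.out_fst_mem _))
  by_cases hv : e.1.out.1 ∈ R
  · exact .inl fun x hx => (hsame x hx).2 hv
  · exact .inr fun x hx => Finset.mem_compl.2 fun h => hv ((hsame x hx).1 h)

lemma joinConf_restrictConf {ω : Conf V} (hω : constOnClusters ω fun x => decide (x ∈ R)) :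
    joinConf R (restrictConf R ω) (restrictConf Rᶜ ω) = ω := by
  ext e
  simp only [joinConf, Finset.mem_union, Finset.mem_map, mem_restrictConf]
  constructor
  · rintro (⟨f, hf, rfl⟩ | ⟨f, hf, rfl⟩) <;> exact hf
  · intro he
    rcases edgeInside_or_edgeInside_compl hω he with h | h <;>
      obtain ⟨f, rfl⟩ := exists_liftEdge_eq_iff.2 h
    exacts [.inl ⟨f, he, rfl⟩, .inr ⟨f, he, rfl⟩]

lemma sum_constOnClusters_eq_sum {β : Type*} [AddCommMonoid β]
    (F : Conf R × Conf ↥Rᶜ → β) :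
    ∑ ω ∈ Finset.univ.filter (fun ω : Conf V => constOnClusters ω fun x => decide (x ∈ R)),
      F (restrictConf R ω, restrictConf Rᶜ ω) = ∑ x, F x :=
  Finset.sum_nbij' (fun ω => (restrictConf R ω, restrictConf Rᶜ ω))
    (fun x => joinConf R x.1 x.2) (by simp) (by simp [constOnClusters_joinConf])
    (fun _ hω => joinConf_restrictConf (Finset.mem_filter.1 hω).2)
    (fun _ _ => by simp [restrictConf_joinConf_left, restrictConf_joinConf_right])
    (fun _ _ => rfl)

end Decomposition

section Weights

variable {V : Type*} [DecidableEq V]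

lemma numClustersIn_eq_numClusters_restrictConf {S : Finset V} {ω : Conf V}
    (hS : ∀ x y, (graphOf ω).Reachable x y → (x ∈ S ↔ y ∈ S)) :
    numClustersIn ω ↑S = numClusters (restrictConf S ω) := by
  rw [numClusters, graphOf_restrictConf, SimpleGraph.card_connectedComponent_induce hS]
  rfl

variable [Fintype V]

-- The number of edges between `R` and `Rᶜ`: by `card_edgeT_add_card_edgeT_compl_le` the
-- subtraction does not truncate.
def crossCount (R : Finset V) : ℕ :=
  Fintype.card (EdgeT V) - (Fintype.card (EdgeT R) + Fintype.card (EdgeT ↥Rᶜ))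

lemma card_edgeT_add_card_edgeT_compl_le (R : Finset V) :
    Fintype.card (EdgeT R) + Fintype.card (EdgeT ↥Rᶜ) ≤ Fintype.card (EdgeT V) := by
  rw [← Fintype.card_sum]
  exact Fintype.card_le_of_injective _
    ((liftEdge R).injective.sumElim (liftEdge Rᶜ).injective liftEdge_ne_liftEdge_compl)

lemma fkWeight_mul_colorWeight_of_constOnClusters (p q α : ℝ) {R : Finset V} {ω : Conf V}
    (hω : constOnClusters ω fun x => decide (x ∈ R)) :
    fkWeight V p q ω * colorWeight ω α (fun x => decide (x ∈ R)) =
      (1 - p) ^ crossCount R * (fkWeight R p (α * q) (restrictConf R ω) *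
        fkWeight ↥Rᶜ p ((1 - α) * q) (restrictConf Rᶜ ω)) := by
  have hR : ∀ x y, (graphOf ω).Reachable x y → (x ∈ R ↔ y ∈ R) := fun x y h => by
    simpa using hω x y h
  have hRc : ∀ x y, (graphOf ω).Reachable x y → (x ∈ Rᶜ ↔ y ∈ Rᶜ) := fun x y h => by
    simpa using (hR x y h).not
  have hred : {x | decide (x ∈ R) = true} = (↑R : Set V) := by ext; simp
  have hblue : {x | decide (x ∈ R) = false} = (↑Rᶜ : Set V) := by ext; simp
  have hclusters : numClusters ω =
      numClusters (restrictConf R ω) + numClusters (restrictConf Rᶜ ω) := by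
    rw [numClusters, SimpleGraph.card_connectedComponent_eq_add (S := ↑R) hR,
      ← Finset.coe_compl]
    exact congrArg₂ (· + ·) (numClustersIn_eq_numClusters_restrictConf hR)
      (numClustersIn_eq_numClusters_restrictConf hRc)
  have hcard : ω.card = (restrictConf R ω).card + (restrictConf Rᶜ ω).card := by
    rw [← card_joinConf, joinConf_restrictConf hω]
  have hmissing : Fintype.card (EdgeT V) - ω.card =
      (Fintype.card (EdgeT R) - (restrictConf R ω).card) +
        (Fintype.card (EdgeT ↥Rᶜ) - (restrictConf Rᶜ ω).card) + crossCount R := by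
    have := card_edgeT_add_card_edgeT_compl_le R
    have := (restrictConf R ω).card_le_univ
    have := (restrictConf Rᶜ ω).card_le_univ
    rw [crossCount]
    omega
  rw [colorWeight, if_pos hω, hred, hblue, numClustersIn_eq_numClusters_restrictConf hR,
    numClustersIn_eq_numClusters_restrictConf hRc, fkWeight, fkWeight, fkWeight, hmissing,
    hcard, hclusters, pow_add, pow_add, pow_add, pow_add, mul_pow, mul_pow]
  ring

end Weights

section Conditioning

variable {V : Type*} [DecidableEq V] [Fintype V]

lemma redSet_eq_iff {c : V → Bool} {R : Finset V} :
    redSet c = R ↔ c = fun x => decide (x ∈ R) := by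
  constructor
  · rintro rfl
    funext x
    simp [redSet]
  · rintro rfl
    ext x
    simp [redSet]

lemma probOf_restrictConf_mem_inter_redSet (p q α : ℝ) (R : Finset V) (A : Set (Conf R))
    (B : Set (Conf ↥Rᶜ)) :
    probOf (fun z : Conf V × (V → Bool) => fkWeight V p q z.1 * colorWeight z.1 α z.2)
        ({z | restrictConf R z.1 ∈ A ∧ restrictConf Rᶜ z.1 ∈ B} ∩ {z | redSet z.2 = R}) =
      (1 - p) ^ crossCount R * ((∑ a ∈ Finset.univ.filter (· ∈ A), fkWeight R p (α * q) a) *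
        ∑ b ∈ Finset.univ.filter (· ∈ B), fkWeight ↥Rᶜ p ((1 - α) * q) b) /
      ∑ z : Conf V × (V → Bool), fkWeight V p q z.1 * colorWeight z.1 α z.2 := by
  rw [probOf]
  congr 1
  let G : Conf R × Conf ↥Rᶜ → ℝ := fun x =>
    if x.1 ∈ A ∧ x.2 ∈ B then
      (1 - p) ^ crossCount R * (fkWeight R p (α * q) x.1 * fkWeight ↥Rᶜ p ((1 - α) * q) x.2)
    else 0
  calc _ = ∑ ω : Conf V, if constOnClusters ω (fun x => decide (x ∈ R)) then
        G (restrictConf R ω, restrictConf Rᶜ ω) else 0 := by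
        rw [Finset.sum_filter, Fintype.sum_prod_type]
        refine Finset.sum_congr rfl fun ω _ => ?_
        rw [Fintype.sum_eq_single (fun x => decide (x ∈ R))]
        · by_cases hω : constOnClusters ω fun x => decide (x ∈ R)
          · simp [G, hω, fkWeight_mul_colorWeight_of_constOnClusters p q α hω, redSet_eq_iff]
          · simp [hω, colorWeight]
        · intro c hc
          simp [redSet_eq_iff, hc]
    _ = ∑ x, G x := by rw [← Finset.sum_filter, sum_constOnClusters_eq_sum]
    _ = _ := by
        rw [Fintype.sum_prod_type, Finset.sum_filter, Finset.sum_filter, Finset.sum_mul_sum,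
          Finset.mul_sum]
        refine Finset.sum_congr rfl fun a _ => ?_
        rw [Finset.mul_sum]
        refine Finset.sum_congr rfl fun b _ => ?_
        by_cases ha : a ∈ A <;> by_cases hb : b ∈ B <;> simp [G, ha, hb]

end Conditioning

section Positivity

variable {V : Type*} [DecidableEq V]

lemma colorWeight_nonneg {α : ℝ} (hα : α ∈ Set.Icc 0 1) (ω : Conf V) (c : V → Bool) :
    0 ≤ colorWeight ω α c := by
  have := hα.1
  have := sub_nonneg.2 hα.2
  unfold colorWeight
  split_ifs <;> positivity

variable [Fintype V]

lemma fkWeight_pos {p q : ℝ} (hp : p ∈ Set.Ioo 0 1) (hq : 0 < q) (ω : Conf V) :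
    0 < fkWeight V p q ω := by
  have := hp.1
  have := sub_pos.2 hp.2
  unfold fkWeight
  positivity

lemma sum_fkWeight_mul_colorWeight_pos {p q α : ℝ} (hp : p ∈ Set.Ioo 0 1) (hq : 0 < q)
    (hα : α ∈ Set.Ioo 0 1) :
    0 < ∑ z : Conf V × (V → Bool), fkWeight V p q z.1 * colorWeight z.1 α z.2 := by
  have hcolor : 0 < colorWeight (∅ : Conf V) α fun _ => true := by
    have := hα.1
    have := sub_pos.2 hα.2
    have hconst : constOnClusters (∅ : Conf V) fun _ => true := fun _ _ _ => rfl
    rw [colorWeight, if_pos hconst]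
    positivity
  exact Finset.sum_pos' (fun z _ => mul_nonneg (fkWeight_pos hp hq _).le
      (colorWeight_nonneg (Set.Ioo_subset_Icc_self hα) _ _))
    ⟨(∅, fun _ => true), Finset.mem_univ _, mul_pos (fkWeight_pos hp hq _) hcolor⟩

end Positivity

/-- **Lemma (Bollobás–Grimmett–Janson).** Sample `ω` from the FK measure on a finite vertex
set `V` with parameters `(p, q)`, and color each cluster red independently with probability
`α`; let `R` be the set of red vertices.  Conditionally on `R`, the restrictions of `ω` to
`R` and to `V ∖ R` are independent, distributed as the FK measures with cluster weights
`αq` on `R` and `(1-α)q` on `V ∖ R` respectively. -/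
theorem fk_coloring_decomposition (V : Type*) [Fintype V] [DecidableEq V]
    (p q α : ℝ) (hp : p ∈ Set.Ioo (0 : ℝ) 1) (hq : 0 < q) (hα : α ∈ Set.Ioo (0 : ℝ) 1)
    (R : Finset V) (A : Set (Conf ↥R)) (B : Set (Conf ↥(Rᶜ))) :
    condProbOf (fun z : Conf V × (V → Bool) => fkWeight V p q z.1 * colorWeight z.1 α z.2)
        {z | restrictConf R z.1 ∈ A ∧ restrictConf Rᶜ z.1 ∈ B}
        {z | redSet z.2 = R}
      = probOf (fkWeight ↥R p (α * q)) A * probOf (fkWeight ↥(Rᶜ) p ((1 - α) * q)) B := by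
  have hcross : (1 - p) ^ crossCount R ≠ 0 := pow_ne_zero _ (sub_ne_zero.2 hp.2.ne')
  have htotal := (sum_fkWeight_mul_colorWeight_pos (V := V) hp hq hα).ne'
  have hredSet := probOf_restrictConf_mem_inter_redSet p q α R Set.univ Set.univ
  simp only [Set.mem_univ, and_self, Set.ofPred_true, Set.univ_inter, Finset.filter_true]
    at hredSet
  rw [condProbOf, probOf_restrictConf_mem_inter_redSet, hredSet, probOf, probOf]
  field_simp
end

section
/- Consider the Erdős–Rényi random graph G(n,p) with np = λ < 1 fixed. There exists c = c(λ) > 0 such that for every ρ > 0 there exists M_0 = M_0(λ,ρ) such that for every M ≥ M_0 there is a constant C with, for all n, π_{n,λ}(|S_M| ≥ ρn) ≤ C·e^{−c·ρ·n}. -/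
open scoped Classical

/-!
Put `I = λ - 1 - log λ > 0`. When the cluster of a vertex is explored inside a vertex set `W`,
each explored vertex contributes at most `Bin(|V|, p)` new vertices, and
`E[exp(θ·Bin(|V|, p))] ≤ exp(λ(e^θ - 1))` at `θ = -log λ` gives `E[exp(I·|𝒞_v|)] ≤ 1/λ`.
The cluster `S` of `v ∈ W` is determined by the edges touching `S`, so it is independent of the
edges inside `W ∖ S`, and the other vertices of `W` see `S_M` of the graph restricted to `W ∖ S`.
By induction on `|W|`, `E[exp(t·|S_M|)] ≤ exp(α|W|)` as soon as
`e^{-α} + λ⁻¹·e^{(t - α - I)M} ≤ 1`. For `t = I/2` and `α = Iρ/4` this holds for all large `M`,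
and Markov's inequality gives `π(|S_M| ≥ ρn) ≤ exp(-Iρn/4)`.
-/

open Finset Real Filter Topology

noncomputable section

namespace ErdosRenyi

section Percolation

variable {V : Type*} [DecidableEq V] [Fintype V]

def percExpect (p : ℝ) (f : Conf V → ℝ) : ℝ :=
  ∑ ω : Conf V, p ^ #ω * (1 - p) ^ (Fintype.card (EdgeT V) - #ω) * f ω

theorem percExpect_const (p c : ℝ) : percExpect p (fun _ : Conf V => c) = c := by
  rw [percExpect, ← sum_mul, ← powerset_univ, ← card_univ, sum_pow_mul_eq_add_pow,
    add_sub_cancel, one_pow, one_mul]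

theorem percExpect_sum {ι : Type*} (p : ℝ) (T : Finset ι) (F : ι → Conf V → ℝ) :
    percExpect p (fun ω => ∑ s ∈ T, F s ω) = ∑ s ∈ T, percExpect p (F s) := by
  simp only [percExpect, mul_sum]
  exact sum_comm

theorem percExpect_add (p : ℝ) (f g : Conf V → ℝ) :
    percExpect p (fun ω => f ω + g ω) = percExpect p f + percExpect p g := by
  simp only [percExpect, mul_add, sum_add_distrib]

theorem percExpect_const_mul (p c : ℝ) (f : Conf V → ℝ) :
    percExpect p (fun ω => c * f ω) = c * percExpect p f := by
  simp only [percExpect, mul_sum]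
  exact sum_congr rfl fun _ _ => by ring

theorem percExpect_mono {p : ℝ} (hp0 : 0 ≤ p) (hp1 : p ≤ 1) {f g : Conf V → ℝ}
    (h : ∀ ω, f ω ≤ g ω) : percExpect p f ≤ percExpect p g := by
  have : 0 ≤ 1 - p := by linarith
  exact sum_le_sum fun ω _ => mul_le_mul_of_nonneg_left (h ω) (by positivity)

theorem percExpect_nonneg {p : ℝ} (hp0 : 0 ≤ p) (hp1 : p ≤ 1) {f : Conf V → ℝ}
    (h : ∀ ω, 0 ≤ f ω) : 0 ≤ percExpect p f :=
  (percExpect_const (V := V) p 0).symm.le.trans (percExpect_mono hp0 hp1 h)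

theorem sum_conf_eq_sum_insert (e : EdgeT V) (g : Conf V → ℝ) :
    ∑ ω : Conf V, g ω = ∑ τ ∈ (univ.erase e).powerset, (g τ + g (insert e τ)) := by
  have h := sum_powerset_insert (notMem_erase e (univ : Finset (EdgeT V))) g
  rw [insert_erase (mem_univ e), powerset_univ] at h
  rw [h, sum_add_distrib]

theorem percExpect_eq_insert_erase (p : ℝ) (e : EdgeT V) (f : Conf V → ℝ) :
    percExpect p f = p * percExpect p (fun ω => f (insert e ω)) +
      (1 - p) * percExpect p (fun ω => f (ω.erase e)) := by
  simp only [percExpect]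
  rw [sum_conf_eq_sum_insert e, sum_conf_eq_sum_insert e, sum_conf_eq_sum_insert e, mul_sum,
    mul_sum, ← sum_add_distrib]
  refine sum_congr rfl fun τ hτ => ?_
  have he : e ∉ τ := fun h => notMem_erase e univ (mem_powerset.1 hτ h)
  have hlt : #τ < Fintype.card (EdgeT V) := card_lt_univ_of_notMem he
  obtain ⟨k, hk⟩ : ∃ k, Fintype.card (EdgeT V) - #τ = k + 1 :=
    ⟨_, (Nat.succ_pred_eq_of_pos (by omega)).symm⟩
  rw [insert_idem, erase_insert he, erase_eq_of_notMem he, card_insert_of_notMem he, hk,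
    show Fintype.card (EdgeT V) - (#τ + 1) = k by omega]
  ring

theorem percExpect_eq_sum_powerset (p : ℝ) (B : Finset (EdgeT V)) (f : Conf V → ℝ) :
    percExpect p f = ∑ β ∈ B.powerset,
      p ^ #β * (1 - p) ^ (#B - #β) * percExpect p (fun ω => f (ω \ B ∪ β)) := by
  induction B using Finset.induction_on with
  | empty => simp
  | insert e B he ih =>
    rw [ih, sum_powerset_insert he, ← sum_add_distrib]
    refine sum_congr rfl fun β hβ => ?_
    have hβB := mem_powerset.1 hβ
    have heβ : e ∉ β := fun h => he (hβB h)
    have hins : ∀ ω : Conf V, insert e ω \ B ∪ β = ω \ insert e B ∪ insert e β := by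
      intro ω; ext x; by_cases hx : x = e <;> simp [hx, he, heβ]
    have hera : ∀ ω : Conf V, ω.erase e \ B ∪ β = ω \ insert e B ∪ β := by
      intro ω; ext x; by_cases hx : x = e <;> simp [hx, heβ]
    have hcard : #β ≤ #B := card_le_card hβB
    rw [percExpect_eq_insert_erase p e]
    simp only [hins, hera, card_insert_of_notMem he, card_insert_of_notMem heβ,
      Nat.add_sub_add_right, Nat.sub_add_comm hcard, pow_succ]
    ring

def DependsOnEdges (f : Conf V → ℝ) (E : Finset (EdgeT V)) : Prop :=
  ∀ ω ω' : Conf V, (∀ e ∈ E, e ∈ ω ↔ e ∈ ω') → f ω = f ω'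

theorem percExpect_mul_of_disjoint (p : ℝ) {f g : Conf V → ℝ} {E₁ E₂ : Finset (EdgeT V)}
    (hE : Disjoint E₁ E₂) (hf : DependsOnEdges f E₁) (hg : DependsOnEdges g E₂) :
    percExpect p (fun ω => f ω * g ω) = percExpect p f * percExpect p g := by
  rw [percExpect_eq_sum_powerset p E₁, percExpect_eq_sum_powerset p E₁ f, sum_mul]
  refine sum_congr rfl fun β hβ => ?_
  have hβ := mem_powerset.1 hβ
  have hfβ : ∀ ω, f (ω \ E₁ ∪ β) = f β := fun ω =>
    hf _ _ fun e he => by simp [he]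
  have hgβ : ∀ ω, g (ω \ E₁ ∪ β) = g ω := fun ω => hg _ _ fun e he => by
    have he₁ : e ∉ E₁ := disjoint_right.1 hE he
    have heβ : e ∉ β := fun h => he₁ (hβ h)
    simp [he₁, heβ]
  simp only [hfβ, hgβ, percExpect_const_mul, percExpect_const]
  ring

theorem percExpect_eq_sum_ite {ι : Type*} [DecidableEq ι] (p : ℝ) (κ : Conf V → ι)
    {T : Finset ι} (hκ : ∀ ω, κ ω ∈ T) (f : Conf V → ℝ) :
    percExpect p f = ∑ s ∈ T, percExpect p (fun ω => if κ ω = s then f ω else 0) := by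
  rw [← percExpect_sum]
  simp [hκ]

theorem percExpect_comp_eq_sum {ι : Type*} [DecidableEq ι] (p : ℝ) (κ : Conf V → ι)
    {T : Finset ι} (hκ : ∀ ω, κ ω ∈ T) (ψ : ι → ℝ) :
    percExpect p (fun ω => ψ (κ ω)) =
      ∑ s ∈ T, percExpect p (fun ω => if κ ω = s then 1 else 0) * ψ s := by
  rw [percExpect_eq_sum_ite p κ hκ]
  refine sum_congr rfl fun s _ => ?_
  rw [mul_comm, ← percExpect_const_mul]
  congr 1
  funext ω
  split_ifs with h <;> simp [h]

theorem percExpect_ge_le_exp_mul_mgf {p : ℝ} (hp0 : 0 ≤ p) (hp1 : p ≤ 1) {t : ℝ} (ht : 0 ≤ t)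
    (X : Conf V → ℝ) (R : ℝ) :
    percExpect p (fun ω => if R ≤ X ω then 1 else 0) ≤
      exp (-t * R) * percExpect p (fun ω => exp (t * X ω)) := by
  rw [← percExpect_const_mul]
  refine percExpect_mono hp0 hp1 fun ω => ?_
  rw [← exp_add]
  split_ifs with h
  · exact one_le_exp (by nlinarith)
  · positivity

end Percolation

section Clusters

variable {V : Type*} [DecidableEq V]

def AdjIn (W : Finset V) (ω : Conf V) (x y : V) : Prop :=
  x ∈ W ∧ y ∈ W ∧ ∃ e ∈ ω, (e : Sym2 V) = s(x, y)

-- Reflexive also at vertices outside `W`; `clusterIn` and `reachCardIn` count only vertices of `W`.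
def ReachIn (W : Finset V) (ω : Conf V) : V → V → Prop :=
  Relation.ReflTransGen (AdjIn W ω)

def clusterIn (W : Finset V) (ω : Conf V) (v : V) : Finset V :=
  W.filter (ReachIn W ω v)

def reachCardIn (W A : Finset V) (ω : Conf V) : ℕ :=
  #(W.filter fun y => ∃ x ∈ A, ReachIn W ω x y)

def SMcardIn (W : Finset V) (ω : Conf V) (M : ℝ) : ℕ :=
  #(W.filter fun x => M < (#(clusterIn W ω x) : ℝ))

variable {W S A : Finset V} {ω ω' : Conf V} {a v x y : V}

theorem AdjIn.symm (h : AdjIn W ω x y) : AdjIn W ω y x := by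
  obtain ⟨hx, hy, e, he, hxy⟩ := h
  exact ⟨hy, hx, e, he, by rw [hxy, Sym2.eq_swap]⟩

theorem ReachIn.symm (h : ReachIn W ω x y) : ReachIn W ω y x := by
  induction h with
  | refl => exact Relation.ReflTransGen.refl
  | tail _ hbc ih => exact ih.head hbc.symm

theorem ReachIn.trans {z : V} (h₁ : ReachIn W ω x y) (h₂ : ReachIn W ω y z) :
    ReachIn W ω x z :=
  Relation.ReflTransGen.trans h₁ h₂

theorem ReachIn.mono {W' : Finset V} (hW : W ⊆ W') (h : ReachIn W ω x y) :
    ReachIn W' ω x y :=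
  Relation.ReflTransGen.mono (fun _ _ h => ⟨hW h.1, hW h.2.1, h.2.2⟩) _ _ h

theorem AdjIn.exists_edge (h : AdjIn W ω x y) :
    ∃ e ∈ ω, (e : Sym2 V) = s(x, y) ∧ edgeInside (W : Set V) e := by
  obtain ⟨hx, hy, e, he, hxy⟩ := h
  refine ⟨e, he, hxy, fun z hz => ?_⟩
  rw [hxy, Sym2.mem_iff] at hz
  rcases hz with rfl | rfl <;> assumption

theorem ReachIn.congr (h : ∀ e, edgeInside (W : Set V) e → (e ∈ ω ↔ e ∈ ω'))
    (hr : ReachIn W ω x y) : ReachIn W ω' x y := by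
  refine Relation.ReflTransGen.mono (fun b c hbc => ?_) _ _ hr
  obtain ⟨e, he, hbc', hin⟩ := hbc.exists_edge
  exact ⟨hbc.1, hbc.2.1, e, (h e hin).1 he, hbc'⟩

theorem mem_clusterIn : y ∈ clusterIn W ω v ↔ y ∈ W ∧ ReachIn W ω v y :=
  mem_filter

theorem clusterIn_subset : clusterIn W ω v ⊆ W :=
  filter_subset _ _

theorem self_mem_clusterIn (hv : v ∈ W) : v ∈ clusterIn W ω v :=
  mem_clusterIn.2 ⟨hv, Relation.ReflTransGen.refl⟩

theorem clusterIn_eq_of_mem (hx : x ∈ clusterIn W ω v) : clusterIn W ω x = clusterIn W ω v := by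
  have hvx := (mem_clusterIn.1 hx).2
  ext y
  simp only [mem_clusterIn]
  exact and_congr_right fun _ => ⟨hvx.trans, hvx.symm.trans⟩

theorem ReachIn.notMem_clusterIn (hx : x ∈ W \ clusterIn W ω v) (h : ReachIn W ω x y) :
    y ∉ clusterIn W ω v := fun hy =>
  (mem_sdiff.1 hx).2 <| mem_clusterIn.2 ⟨(mem_sdiff.1 hx).1, (mem_clusterIn.1 hy).2.trans h.symm⟩

theorem ReachIn.sdiff_clusterIn (hx : x ∈ W \ clusterIn W ω v) (h : ReachIn W ω x y) :
    ReachIn (W \ clusterIn W ω v) ω x y := by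
  induction h with
  | refl => exact Relation.ReflTransGen.refl
  | tail hxb hbc ih =>
    exact ih.tail ⟨mem_sdiff.2 ⟨hbc.1, ReachIn.notMem_clusterIn hx hxb⟩,
      mem_sdiff.2 ⟨hbc.2.1, ReachIn.notMem_clusterIn hx (hxb.tail hbc)⟩, hbc.2.2⟩

theorem clusterIn_sdiff_clusterIn (hx : x ∈ W \ clusterIn W ω v) :
    clusterIn (W \ clusterIn W ω v) ω x = clusterIn W ω x := by
  ext y
  simp only [mem_clusterIn]
  constructor
  · rintro ⟨hy, hxy⟩
    exact ⟨(mem_sdiff.1 hy).1, hxy.mono sdiff_subset⟩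
  · rintro ⟨hy, hxy⟩
    exact ⟨mem_sdiff.2 ⟨hy, hxy.notMem_clusterIn hx⟩, hxy.sdiff_clusterIn hx⟩

theorem SMcardIn_eq_add (M : ℝ) :
    SMcardIn W ω M = (if M < (#(clusterIn W ω v) : ℝ) then #(clusterIn W ω v) else 0) +
      SMcardIn (W \ clusterIn W ω v) ω M := by
  set C := clusterIn W ω v
  have hW : W.filter (fun x => M < (#(clusterIn W ω x) : ℝ)) =
      C.filter (fun x => M < (#(clusterIn W ω x) : ℝ)) ∪
        (W \ C).filter (fun x => M < (#(clusterIn W ω x) : ℝ)) := by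
    rw [← filter_union, union_sdiff_of_subset clusterIn_subset]
  rw [SMcardIn, SMcardIn, hW, card_union_of_disjoint (disjoint_filter_filter disjoint_sdiff)]
  congr 1
  · rw [filter_congr fun x hx => by rw [clusterIn_eq_of_mem hx]]
    split_ifs with h
    · rw [filter_true_of_mem fun _ _ => h]
    · rw [filter_false_of_mem fun _ _ => h, card_empty]
  · exact congrArg card (filter_congr fun x hx => by rw [clusterIn_sdiff_clusterIn hx])

theorem clusterIn_congr (h : ∀ e, edgeInside (W : Set V) e → (e ∈ ω ↔ e ∈ ω')) :
    clusterIn W ω v = clusterIn W ω' v :=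
  filter_congr fun _ _ => ⟨ReachIn.congr h, ReachIn.congr fun e he => (h e he).symm⟩

theorem SMcardIn_congr (h : ∀ e, edgeInside (W : Set V) e → (e ∈ ω ↔ e ∈ ω')) (M : ℝ) :
    SMcardIn W ω M = SMcardIn W ω' M := by
  simp only [SMcardIn, clusterIn_congr h]

theorem reachCardIn_congr (h : ∀ e, edgeInside (W : Set V) e → (e ∈ ω ↔ e ∈ ω')) :
    reachCardIn W A ω = reachCardIn W A ω' :=
  congrArg card <| filter_congr fun _ _ =>
    exists_congr fun _ => and_congr_right fun _ =>
      ⟨ReachIn.congr h, ReachIn.congr fun e he => (h e he).symm⟩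

theorem reachCardIn_singleton : reachCardIn W {v} ω = #(clusterIn W ω v) := by
  simp [reachCardIn, clusterIn]

theorem ReachIn.erase_or_exists_adjIn (h : ReachIn W ω x y) (hy : y ≠ a) :
    ReachIn (W.erase a) ω x y ∨ ∃ z, AdjIn W ω a z ∧ z ≠ a ∧ ReachIn (W.erase a) ω z y := by
  induction h with
  | refl => exact Or.inl Relation.ReflTransGen.refl
  | @tail b c _ hbc ih =>
    by_cases hba : b = a
    · subst hba
      exact Or.inr ⟨c, hbc, hy, Relation.ReflTransGen.refl⟩
    · have hadj : AdjIn (W.erase a) ω b c :=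
        ⟨mem_erase.2 ⟨hba, hbc.1⟩, mem_erase.2 ⟨hy, hbc.2.1⟩, hbc.2.2⟩
      rcases ih hba with h' | ⟨z, hz, hza, hzb⟩
      · exact Or.inl (h'.tail hadj)
      · exact Or.inr ⟨z, hz, hza, hzb.tail hadj⟩

theorem ReachIn.eq_of_erase (h : ReachIn (W.erase a) ω a y) : y = a := by
  rcases Relation.ReflTransGen.cases_head h with rfl | ⟨z, hz, _⟩
  · rfl
  · exact absurd hz.1 (notMem_erase a W)

theorem reachCardIn_le_one_add_erase (ha : a ∈ A) :
    reachCardIn W A ω ≤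
      1 + reachCardIn (W.erase a) ((A ∪ W.filter (AdjIn W ω a)).erase a) ω := by
  set A' := (A ∪ W.filter (AdjIn W ω a)).erase a
  have hsub : W.filter (fun y => ∃ x ∈ A, ReachIn W ω x y) ⊆
      insert a ((W.erase a).filter fun y => ∃ x ∈ A', ReachIn (W.erase a) ω x y) := by
    intro y hy
    obtain ⟨hyW, x, hxA, hxy⟩ := mem_filter.1 hy
    rcases eq_or_ne y a with rfl | hya
    · exact mem_insert_self _ _
    refine mem_insert_of_mem (mem_filter.2 ⟨mem_erase.2 ⟨hya, hyW⟩, ?_⟩)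
    rcases hxy.erase_or_exists_adjIn hya with h' | ⟨z, hz, hza, hzy⟩
    · have hxa : x ≠ a := by rintro rfl; exact hya h'.eq_of_erase
      exact ⟨x, mem_erase.2 ⟨hxa, mem_union_left _ hxA⟩, h'⟩
    · exact ⟨z, mem_erase.2 ⟨hza, mem_union_right _ (mem_filter.2 ⟨hz.2.1, hz⟩)⟩, hzy⟩
  calc reachCardIn W A ω ≤ #(insert a _) := card_le_card hsub
    _ ≤ _ := by rw [add_comm]; exact card_insert_le _ _

theorem card_filter_adjIn_le (β : Conf V) : #(W.filter (AdjIn W β a)) ≤ #β := by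
  refine card_le_card_of_surjOn
    (fun e : EdgeT V => if h : a ∈ (e : Sym2 V) then Sym2.Mem.other' h else a) ?_
  intro y hy
  obtain ⟨e, he, hey, -⟩ := (mem_filter.1 hy).2.exists_edge
  have hae : a ∈ (e : Sym2 V) := hey ▸ Sym2.mem_mk_left a y
  refine ⟨e, he, ?_⟩
  simp only [dif_pos hae]
  exact Sym2.congr_right.1 ((Sym2.other_spec' hae).trans hey)

theorem card_explored_add_one_le (ha : a ∈ A) (β : Conf V) :
    #((A ∪ W.filter (AdjIn W β a)).erase a) + 1 ≤ #A + #β := by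
  rw [card_erase_add_one (mem_union_left _ ha)]
  exact (card_union_le _ _).trans (Nat.add_le_add_left (card_filter_adjIn_le β) _)

theorem graphOf_adj :
    (graphOf ω).Adj x y ↔ ∃ e ∈ ω, (e : Sym2 V) = s(x, y) := by
  rw [graphOf, SimpleGraph.fromEdgeSet_adj]
  constructor
  · rintro ⟨⟨e, he, hxy⟩, -⟩
    exact ⟨e, he, hxy⟩
  · rintro ⟨e, he, hxy⟩
    refine ⟨⟨e, he, hxy⟩, fun h => e.2 ?_⟩
    rw [hxy, h]
    exact Sym2.mk_isDiag_iff.2 rfl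

end Clusters

section Edges

variable {V : Type*} [DecidableEq V] [Fintype V] {W S : Finset V} {ω ω' : Conf V} {v x y : V}

def insideEdges (W : Finset V) : Finset (EdgeT V) :=
  univ.filter (edgeInside (W : Set V))

def touchingEdges (W S : Finset V) : Finset (EdgeT V) :=
  univ.filter fun e => edgeInside (W : Set V) e ∧ ∃ x ∈ (e : Sym2 V), x ∈ S

theorem mem_insideEdges {e : EdgeT V} : e ∈ insideEdges W ↔ edgeInside (W : Set V) e := by
  simp [insideEdges]

theorem disjoint_touchingEdges_insideEdges_sdiff :
    Disjoint (touchingEdges W S) (insideEdges (W \ S)) := by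
  refine disjoint_left.2 fun e he he' => ?_
  obtain ⟨x, hx, hxS⟩ := (mem_filter.1 he).2.2
  exact (mem_sdiff.1 (mem_insideEdges.1 he' x hx)).2 hxS

theorem AdjIn.of_agree_touchingEdges (h : ∀ e ∈ touchingEdges W S, e ∈ ω → e ∈ ω')
    (hx : x ∈ S) (hadj : AdjIn W ω x y) : AdjIn W ω' x y := by
  obtain ⟨e, he, hxy, hin⟩ := hadj.exists_edge
  have het : e ∈ touchingEdges W S :=
    mem_filter.2 ⟨mem_univ _, hin, x, hxy ▸ Sym2.mem_mk_left x y, hx⟩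
  exact ⟨hadj.1, hadj.2.1, e, h e het he, hxy⟩

theorem clusterIn_eq_of_agree_touchingEdges (h : ∀ e ∈ touchingEdges W S, e ∈ ω ↔ e ∈ ω')
    (hS : clusterIn W ω v = S) : clusterIn W ω' v = S := by
  have hfwd : ∀ y, ReachIn W ω v y → ReachIn W ω' v y := by
    intro y hy
    induction hy with
    | refl => exact Relation.ReflTransGen.refl
    | @tail b c hvb hbc ih =>
      have hb : b ∈ S := hS ▸ mem_clusterIn.2 ⟨hbc.1, hvb⟩
      exact ih.tail (hbc.of_agree_touchingEdges (fun e he => (h e he).1) hb)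
  have hbwd : ∀ y, ReachIn W ω' v y → y ∈ W → y ∈ S := by
    intro y hy
    induction hy with
    | refl => exact fun hv => hS ▸ self_mem_clusterIn hv
    | @tail b c _ hbc ih =>
      intro _
      have hb : b ∈ clusterIn W ω v := hS ▸ ih hbc.1
      have hbc' := hbc.of_agree_touchingEdges (fun e he => (h e he).2) (hS ▸ hb)
      exact hS ▸ mem_clusterIn.2 ⟨hbc.2.1, (mem_clusterIn.1 hb).2.tail hbc'⟩
  ext y
  rw [mem_clusterIn]
  refine ⟨fun ⟨hyW, hvy⟩ => hbwd y hvy hyW, fun hy => ?_⟩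
  obtain ⟨hyW, hvy⟩ := mem_clusterIn.1 (hS ▸ hy)
  exact ⟨hyW, hfwd y hvy⟩

end Edges

section Exploration

variable {V : Type*} [DecidableEq V] [Fintype V] {W A : Finset V} {ω β : Conf V} {a : V}

theorem mem_touchingEdges_singleton {e : EdgeT V} :
    e ∈ touchingEdges W {a} ↔ edgeInside (W : Set V) e ∧ a ∈ (e : Sym2 V) := by
  simp [touchingEdges]

theorem card_touchingEdges_singleton_le : #(touchingEdges W {a}) ≤ Fintype.card V := by
  rw [← card_univ]
  refine card_le_card_of_injOn
    (fun e : EdgeT V => if h : a ∈ (e : Sym2 V) then Sym2.Mem.other' h else a)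
    (fun _ _ => mem_univ _) fun e₁ h₁ e₂ h₂ heq => ?_
  have ha₁ := (mem_touchingEdges_singleton.1 h₁).2
  have ha₂ := (mem_touchingEdges_singleton.1 h₂).2
  simp only [dif_pos ha₁, dif_pos ha₂] at heq
  exact Subtype.ext <| by rw [← Sym2.other_spec' ha₁, ← Sym2.other_spec' ha₂, heq]

theorem filter_adjIn_sdiff_union :
    W.filter (AdjIn W (ω \ touchingEdges W {a} ∪ β) a) = W.filter (AdjIn W β a) := by
  refine filter_congr fun y _ => ⟨fun h => ?_, fun ⟨ha, hy, e, he, hay⟩ =>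
    ⟨ha, hy, e, mem_union_right _ he, hay⟩⟩
  obtain ⟨e, he, hay, hin⟩ := h.exists_edge
  have heB : e ∈ touchingEdges W {a} :=
    mem_touchingEdges_singleton.2 ⟨hin, hay ▸ Sym2.mem_mk_left a y⟩
  exact ⟨h.1, h.2.1, e, (mem_union.1 he).resolve_left fun h => (mem_sdiff.1 h).2 heB, hay⟩

theorem mem_sdiff_union_iff_of_edgeInside_erase (hβ : β ⊆ touchingEdges W {a}) {e : EdgeT V}
    (he : edgeInside ((W.erase a : Finset V) : Set V) e) :
    e ∈ ω \ touchingEdges W {a} ∪ β ↔ e ∈ ω := by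
  have heB : e ∉ touchingEdges W {a} := fun h =>
    notMem_erase a W (he a (mem_touchingEdges_singleton.1 h).2)
  have heβ : e ∉ β := fun h => heB (hβ h)
  simp [heB, heβ]

theorem reachCardIn_sdiff_union_le (ha : a ∈ A) (hβ : β ⊆ touchingEdges W {a}) :
    reachCardIn W A (ω \ touchingEdges W {a} ∪ β) ≤
      1 + reachCardIn (W.erase a) ((A ∪ W.filter (AdjIn W β a)).erase a) ω := by
  have h := reachCardIn_le_one_add_erase (W := W) (ω := ω \ touchingEdges W {a} ∪ β) ha
  rwa [filter_adjIn_sdiff_union,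
    reachCardIn_congr fun e he => mem_sdiff_union_iff_of_edgeInside_erase hβ he] at h

theorem sum_powerset_pow_mul_exp_le {ι : Type*} (B : Finset ι) {p θ lam : ℝ} (hp0 : 0 ≤ p)
    (hθ : 0 ≤ θ) (hB : #B * p ≤ lam) (c : ℝ) :
    ∑ β ∈ B.powerset, p ^ #β * (1 - p) ^ (#B - #β) * exp (c + θ * #β) ≤
      exp (c + lam * (exp θ - 1)) := by
  have hx : 0 ≤ exp θ - 1 := by linarith [one_le_exp hθ]
  calc _ = exp c * (1 + p * (exp θ - 1)) ^ #B := by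
        rw [show 1 + p * (exp θ - 1) = p * exp θ + (1 - p) by ring, ← sum_pow_mul_eq_add_pow,
          mul_sum]
        refine sum_congr rfl fun β _ => ?_
        rw [mul_pow, ← exp_nat_mul, exp_add, mul_comm θ]
        ring
    _ ≤ exp c * exp (p * (exp θ - 1)) ^ #B := by
        gcongr
        linarith [add_one_le_exp (p * (exp θ - 1))]
    _ ≤ exp (c + lam * (exp θ - 1)) := by
        rw [← exp_nat_mul, ← exp_add]
        exact exp_le_exp.2 (by nlinarith)

theorem percExpect_exp_reachCardIn_le {p lam θ I : ℝ} (hp0 : 0 ≤ p) (hp1 : p ≤ 1)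
    (hθ : 0 ≤ θ) (hI0 : 0 ≤ I) (hpV : p * Fintype.card V ≤ lam)
    (hI : I ≤ θ - lam * (exp θ - 1)) (W A : Finset V) (hA : A ⊆ W) :
    percExpect p (fun ω => exp (I * reachCardIn W A ω)) ≤ exp (θ * #A) := by
  induction W using Finset.strongInduction generalizing A with
  | H W ih =>
  rcases A.eq_empty_or_nonempty with rfl | ⟨a, ha⟩
  · simp [reachCardIn, percExpect_const]
  set B := touchingEdges W {a}
  have hterm : ∀ β ∈ B.powerset, percExpect p (fun ω => exp (I * reachCardIn W A (ω \ B ∪ β)))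
      ≤ exp (I + θ * (#A - 1) + θ * #β) := by
    intro β hβ
    set Aβ := (A ∪ W.filter (AdjIn W β a)).erase a
    have hcard : (#Aβ : ℝ) + 1 ≤ #A + #β := by exact_mod_cast card_explored_add_one_le ha β
    calc _ ≤ percExpect p (fun ω => exp I * exp (I * reachCardIn (W.erase a) Aβ ω)) := by
          refine percExpect_mono hp0 hp1 fun ω => ?_
          have h : (reachCardIn W A (ω \ B ∪ β) : ℝ) ≤ 1 + reachCardIn (W.erase a) Aβ ω := by
            exact_mod_cast reachCardIn_sdiff_union_le ha (mem_powerset.1 hβ)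
          rw [← exp_add]
          exact exp_le_exp.2 (by nlinarith)
      _ ≤ exp I * exp (θ * #Aβ) := by
          rw [percExpect_const_mul]
          gcongr
          exact ih _ (erase_ssubset (hA ha)) Aβ
            (erase_subset_erase a (union_subset hA (filter_subset _ _)))
      _ ≤ _ := by
          rw [← exp_add]
          exact exp_le_exp.2 (by nlinarith)
  have hB : #B * p ≤ lam := by
    have : (#B : ℝ) ≤ Fintype.card V := by exact_mod_cast card_touchingEdges_singleton_le
    nlinarith
  have h1p : 0 ≤ 1 - p := by linarith
  rw [percExpect_eq_sum_powerset p B]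
  calc _ ≤ ∑ β ∈ B.powerset, p ^ #β * (1 - p) ^ (#B - #β) * exp (I + θ * (#A - 1) + θ * #β) :=
        sum_le_sum fun β hβ => mul_le_mul_of_nonneg_left (hterm β hβ) (by positivity)
    _ ≤ exp (I + θ * (#A - 1) + lam * (exp θ - 1)) := sum_powerset_pow_mul_exp_le B hp0 hθ hB _
    _ ≤ exp (θ * #A) := exp_le_exp.2 (by linarith)

end Exploration

section LargeClusters

variable {V : Type*} [DecidableEq V] [Fintype V]

theorem exp_ite_sub_le {t α I M k : ℝ} (hk : 1 ≤ k) (hα : 0 ≤ α) (htI : t - α - I ≤ 0) :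
    exp (t * (if M < k then k else 0) - α * k) ≤
      exp (-α) + exp ((t - α - I) * M) * exp (I * k) := by
  split_ifs with hMk
  · calc exp (t * k - α * k) ≤ exp ((t - α - I) * M) * exp (I * k) := by
          rw [← exp_add]; exact exp_le_exp.2 (by nlinarith)
      _ ≤ _ := le_add_of_nonneg_left (exp_pos _).le
  · calc exp (t * 0 - α * k) ≤ exp (-α) := exp_le_exp.2 (by nlinarith)
      _ ≤ _ := le_add_of_nonneg_right (by positivity)

theorem percExpect_ite_clusterIn_exp_SMcardIn (p t M : ℝ) (W S : Finset V) (v : V) :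
    percExpect p (fun ω => if clusterIn W ω v = S then exp (t * SMcardIn W ω M) else 0) =
      percExpect p (fun ω => if clusterIn W ω v = S then 1 else 0) *
        (exp (t * if M < (#S : ℝ) then (#S : ℝ) else 0) *
          percExpect p (fun ω => exp (t * SMcardIn (W \ S) ω M))) := by
  set ind : Conf V → ℝ := fun ω => if clusterIn W ω v = S then 1 else 0
  have hsplit : ∀ ω, (if clusterIn W ω v = S then exp (t * SMcardIn W ω M) else 0) =
      exp (t * if M < (#S : ℝ) then (#S : ℝ) else 0) *
        (ind ω * exp (t * SMcardIn (W \ S) ω M)) := by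
    intro ω
    by_cases h : clusterIn W ω v = S
    · rw [SMcardIn_eq_add (v := v) M, h]
      simp only [ind, if_pos h, one_mul, ← exp_add]
      push_cast
      ring_nf
    · simp [ind, h]
  have hind : DependsOnEdges ind (touchingEdges W S) := fun ω ω' h =>
    if_congr ⟨clusterIn_eq_of_agree_touchingEdges h,
      clusterIn_eq_of_agree_touchingEdges fun e he => (h e he).symm⟩ rfl rfl
  have hrest : DependsOnEdges (fun ω => exp (t * SMcardIn (W \ S) ω M)) (insideEdges (W \ S)) :=
    fun ω ω' h => by simp only [SMcardIn_congr fun e he => h e (mem_insideEdges.2 he)]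
  simp only [hsplit, percExpect_const_mul]
  rw [percExpect_mul_of_disjoint p disjoint_touchingEdges_insideEdges_sdiff hind hrest]
  ring

theorem percExpect_exp_SMcardIn_le {p : ℝ} (hp0 : 0 ≤ p) (hp1 : p ≤ 1) {I K t α M : ℝ}
    (hα : 0 ≤ α) (htI : t - α - I ≤ 0) (hK : exp (-α) + K * exp ((t - α - I) * M) ≤ 1)
    (hC : ∀ W : Finset V, ∀ v ∈ W, percExpect p (fun ω => exp (I * #(clusterIn W ω v))) ≤ K)
    (W : Finset V) :
    percExpect p (fun ω => exp (t * SMcardIn W ω M)) ≤ exp (α * #W) := by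
  induction W using Finset.strongInduction with
  | H W ih =>
  rcases W.eq_empty_or_nonempty with rfl | ⟨v, hv⟩
  · simp [SMcardIn, percExpect_const]
  set T := W.powerset.filter (v ∈ ·)
  have hmem : ∀ ω, clusterIn W ω v ∈ T := fun ω =>
    mem_filter.2 ⟨mem_powerset.2 clusterIn_subset, self_mem_clusterIn hv⟩
  set ψ : Finset V → ℝ := fun S =>
    exp (t * if M < (#S : ℝ) then (#S : ℝ) else 0) * exp (α * #(W \ S))
  have hψ : ∀ ω, ψ (clusterIn W ω v) ≤
      exp (α * #W) * (exp (-α) + exp ((t - α - I) * M) * exp (I * #(clusterIn W ω v))) := by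
    intro ω
    have hk : (1 : ℝ) ≤ #(clusterIn W ω v) := by
      exact_mod_cast card_pos.2 ⟨v, self_mem_clusterIn hv⟩
    refine le_of_eq_of_le ?_ (mul_le_mul_of_nonneg_left (exp_ite_sub_le hk hα htI) (exp_pos _).le)
    simp only [ψ, card_sdiff_of_subset clusterIn_subset,
      Nat.cast_sub (card_le_card clusterIn_subset), ← exp_add]
    ring_nf
  calc percExpect p (fun ω => exp (t * SMcardIn W ω M))
      = ∑ S ∈ T, percExpect p (fun ω => if clusterIn W ω v = S then 1 else 0) *
          (exp (t * if M < (#S : ℝ) then (#S : ℝ) else 0) *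
            percExpect p (fun ω => exp (t * SMcardIn (W \ S) ω M))) := by
        rw [percExpect_eq_sum_ite p _ hmem]
        exact sum_congr rfl fun S _ => percExpect_ite_clusterIn_exp_SMcardIn p t M W S v
    _ ≤ ∑ S ∈ T, percExpect p (fun ω => if clusterIn W ω v = S then 1 else 0) * ψ S := by
        refine sum_le_sum fun S hS => ?_
        obtain ⟨hSW, hvS⟩ := mem_filter.1 hS
        refine mul_le_mul_of_nonneg_left ?_ (percExpect_nonneg hp0 hp1 fun ω => by positivity)
        exact mul_le_mul_of_nonneg_left (ih _ (sdiff_ssubset (mem_powerset.1 hSW) ⟨v, hvS⟩))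
          (exp_pos _).le
    _ = percExpect p (fun ω => ψ (clusterIn W ω v)) := (percExpect_comp_eq_sum p _ hmem ψ).symm
    _ ≤ percExpect p (fun ω => exp (α * #W) *
          (exp (-α) + exp ((t - α - I) * M) * exp (I * #(clusterIn W ω v)))) :=
        percExpect_mono hp0 hp1 hψ
    _ ≤ exp (α * #W) := by
        rw [percExpect_const_mul, percExpect_add, percExpect_const, percExpect_const_mul]
        exact mul_le_of_le_one_right (exp_pos _).le
          (by nlinarith [hC W v hv, exp_pos ((t - α - I) * M)])

end LargeClusters

section FKModel

variable {V : Type*} [DecidableEq V] [Fintype V]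

theorem reachable_graphOf_iff {ω : Conf V} {x y : V} :
    (graphOf ω).Reachable x y ↔ ReachIn univ ω x y := by
  have : (graphOf ω).Adj = AdjIn univ ω := by
    ext x y
    simp [AdjIn, graphOf_adj]
  rw [SimpleGraph.reachable_iff_reflTransGen, this, ReachIn]

theorem clusterSize_eq_card_clusterIn (ω : Conf V) (x : V) :
    clusterSize ω x = #(clusterIn univ ω x) := by
  simp [clusterSize, clusterIn, reachable_graphOf_iff, Nat.card_eq_fintype_card,
    Fintype.card_subtype]

theorem SMcard_eq_SMcardIn_univ (ω : Conf V) (M : ℝ) : SMcard ω M = SMcardIn univ ω M := by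
  simp only [SMcard, SMcardIn, clusterSize_eq_card_clusterIn, gt_iff_lt]

theorem probOf_fkWeight_one (p : ℝ) (A : Set (Conf V)) :
    probOf (fkWeight V p 1) A = percExpect p (fun ω => if ω ∈ A then 1 else 0) := by
  have hw : ∀ ω, fkWeight V p 1 ω = p ^ #ω * (1 - p) ^ (Fintype.card (EdgeT V) - #ω) :=
    fun ω => by simp [fkWeight]
  have htotal : ∑ ω, fkWeight V p 1 ω = 1 := by
    simpa [percExpect, hw] using percExpect_const (V := V) p 1
  rw [probOf, htotal, div_one, sum_filter, percExpect]
  simp [hw]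

theorem percExpect_exp_card_clusterIn_le {p lam : ℝ} (hp0 : 0 ≤ p) (hp1 : p ≤ 1) (h0 : 0 < lam)
    (h1 : lam ≤ 1) (hpV : p * Fintype.card V ≤ lam) (W : Finset V) {v : V} (hv : v ∈ W) :
    percExpect p (fun ω => exp ((lam - 1 - log lam) * #(clusterIn W ω v))) ≤ lam⁻¹ := by
  have hI : lam - 1 - log lam = -log lam - lam * (exp (-log lam) - 1) := by
    rw [exp_neg, exp_log h0]
    field_simp
    ring
  have h := percExpect_exp_reachCardIn_le hp0 hp1 (neg_nonneg.2 (log_nonpos h0.le h1))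
    (by linarith [log_le_sub_one_of_pos h0]) hpV hI.le W {v} (singleton_subset_iff.2 hv)
  simpa [reachCardIn_singleton, exp_neg, exp_log h0] using h

theorem edgeProb_bounds {lam : ℝ} (h0 : 0 ≤ lam) (h1 : lam ≤ 1) (n : ℕ) :
    0 ≤ lam / n ∧ lam / n ≤ 1 ∧ lam / n * Fintype.card (Fin n) ≤ lam := by
  rcases n.eq_zero_or_pos with rfl | hn
  · simp [h0]
  have hn : (1 : ℝ) ≤ n := by exact_mod_cast hn
  refine ⟨by positivity, div_le_one_of_le₀ (h1.trans hn) (by positivity), ?_⟩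
  rw [Fintype.card_fin, div_mul_cancel₀ _ (by positivity)]

theorem eventually_exp_neg_add_mul_exp_le_one {α K r : ℝ} (hα : 0 < α) (hr : r < 0) :
    ∀ᶠ M in atTop, exp (-α) + K * exp (r * M) ≤ 1 := by
  have h : Tendsto (fun M => K * exp (r * M)) atTop (𝓝 0) := by
    simpa using (tendsto_exp_atBot.comp (tendsto_id.const_mul_atTop_of_neg hr)).const_mul K
  filter_upwards [h.eventually (ge_mem_nhds (sub_pos.2 (exp_lt_one_iff.2 (neg_neg_of_pos hα))))]
    with M hM
  linarith

end FKModel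

end ErdosRenyi

end

open ErdosRenyi

/-- **Lemma 3.1.** For `G(n,p)` with `np = λ < 1` fixed, there is `c > 0` such that for every
`ρ > 0` there is `M₀(λ,ρ)` such that for every `M ≥ M₀` there is a constant `C` with
`π_{n,λ}(|S_M| ≥ ρn) ≤ C e^{-cρn}` for all `n`. -/
theorem er_subcritical_SM (lam : ℝ) (h0 : 0 < lam) (hlam : lam < 1) :
    ∃ c > (0 : ℝ), ∀ ρ : ℝ, 0 < ρ → ∃ M₀ : ℝ, ∀ M ≥ M₀, ∃ C > (0 : ℝ), ∀ n : ℕ,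
      fkProb n (lam / n) 1 {ω | ρ * n ≤ (SMcard ω M : ℝ)} ≤ C * Real.exp (-c * ρ * n) := by
  set I := lam - 1 - log lam
  have hI : 0 < I := by linarith [log_lt_sub_one_of_pos h0 hlam.ne]
  refine ⟨I / 4, by positivity, fun ρ hρ => ?_⟩
  have hrate : I / 2 - I * ρ / 4 - I < 0 := by nlinarith
  obtain ⟨M₀, hM₀⟩ := eventually_atTop.1
    (eventually_exp_neg_add_mul_exp_le_one (α := I * ρ / 4) (K := lam⁻¹) (by positivity) hrate)
  refine ⟨M₀, fun M hM => ⟨1, one_pos, fun n => ?_⟩⟩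
  obtain ⟨hp0, hp1, hpn⟩ := edgeProb_bounds h0.le hlam.le n
  have hSM := percExpect_exp_SMcardIn_le hp0 hp1 (by positivity) hrate.le (hM₀ M hM)
    (fun W v hv => percExpect_exp_card_clusterIn_le hp0 hp1 h0 hlam.le hpn W hv) univ
  rw [fkProb, probOf_fkWeight_one, one_mul]
  simp only [Set.mem_ofPred_eq, SMcard_eq_SMcardIn_univ]
  calc _ ≤ exp (-(I / 2) * (ρ * n)) *
        percExpect (lam / n) (fun ω => exp (I / 2 * SMcardIn univ ω M)) :=
        percExpect_ge_le_exp_mul_mgf hp0 hp1 (by positivity) _ _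
    _ ≤ exp (-(I / 2) * (ρ * n)) * exp (I * ρ / 4 * n) := by
        gcongr
        simpa using hSM
    _ = exp (-(I / 4) * ρ * n) := by
        rw [← exp_add]
        ring_nf
end

section
/- Let ω be a fixed edge configuration on n vertices, let M > 0, ε > 0, and suppose |S_M(ω)| ≤ εn. Independently color each cluster of ω collectively red with probability α ∈ [0,1], and let R be the set of all red vertices. Then for every δ > 0, the probability that ||R| − αn| ≥ (ε + δ)n is at most 2·exp(−δ²·n/(2M²)). -/
open scoped Classical

/-!
A coloring that is constant on clusters is the lift of an independent Bernoulli(`α`) family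
indexed by the clusters, and `|R| - αn = ∑_C |C| (𝟙[C red] - α)`. Discarding the clusters of
size larger than `M` moves this sum by at most `|S_M| ≤ εn`. The remaining sum has at most `n`
independent centered terms, each of the form `s (𝟙[C red] - α)` with `0 ≤ s ≤ M`, so
Hoeffding's inequality bounds each of its two tails by `exp (-(δn)² / (2nM²))`; the
sub-Gaussian estimate behind it is `α e^{u(1-α)} + (1-α) e^{-uα} ≤ cosh u ≤ e^{u²/2}`.
-/

open Finset Real

section BernoulliProduct

variable {ι : Type*} [Fintype ι] {α : ℝ}

def bernoulliWeight (α : ℝ) (g : ι → Bool) : ℝ := ∏ i, if g i then α else 1 - α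

def centeredSum (α : ℝ) (s : ι → ℝ) (g : ι → Bool) : ℝ :=
  ∑ i, s i * ((if g i then 1 else 0) - α)

lemma bernoulliWeight_nonneg (hα : α ∈ Set.Icc 0 1) (g : ι → Bool) :
    0 ≤ bernoulliWeight α g :=
  prod_nonneg fun i _ => by split_ifs <;> linarith [hα.1, hα.2]

lemma sum_bernoulliWeight : ∑ g : ι → Bool, bernoulliWeight α g = 1 := by
  unfold bernoulliWeight
  rw [← Fintype.prod_sum (fun _ (b : Bool) => if b then α else 1 - α)]
  simp

lemma centeredSum_neg (s : ι → ℝ) (g : ι → Bool) :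
    centeredSum α (-s) g = -centeredSum α s g := by
  simp [centeredSum, sum_neg_distrib]

lemma abs_centeredSum_sub_le (hα : α ∈ Set.Icc 0 1) (a b : ι → ℝ) (g : ι → Bool) :
    |centeredSum α a g - centeredSum α b g| ≤ ∑ i, |a i - b i| := by
  rw [centeredSum, centeredSum, ← sum_sub_distrib]
  refine (abs_sum_le_sum_abs _ _).trans (sum_le_sum fun i _ => ?_)
  have hbit : |(if g i then 1 else 0) - α| ≤ 1 := by
    rw [abs_le]; split_ifs <;> constructor <;> linarith [hα.1, hα.2]
  rw [← sub_mul, abs_mul]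
  exact mul_le_of_le_one_right (abs_nonneg _) hbit

lemma bernoulli_mgf_le (hα : α ∈ Set.Icc 0 1) (u : ℝ) :
    α * exp (u * (1 - α)) + (1 - α) * exp (-(u * α)) ≤ exp (u ^ 2 / 2) := by
  -- `exp` lies below its chord over `[-u, u]`; averaging the chord against the centered
  -- two-point law gives `cosh u`.
  have chord : ∀ y ∈ Set.Icc (-1 : ℝ) 1,
      exp (u * y) ≤ (1 + y) / 2 * exp u + (1 - y) / 2 * exp (-u) := by
    rintro y ⟨hy₁, hy₂⟩
    have h := convexOn_exp.2 (Set.mem_univ u) (Set.mem_univ (-u))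
      (by linarith : 0 ≤ (1 + y) / 2) (by linarith : 0 ≤ (1 - y) / 2) (by ring)
    rwa [smul_eq_mul, smul_eq_mul, show (1 + y) / 2 * u + (1 - y) / 2 * -u = u * y by ring] at h
  have h₁ := chord (1 - α) ⟨by linarith [hα.2], by linarith [hα.1]⟩
  have h₀ := chord (-α) ⟨by linarith [hα.2], by linarith [hα.1]⟩
  rw [mul_neg] at h₀
  have hcosh : (exp u + exp (-u)) / 2 ≤ exp (u ^ 2 / 2) := by
    simpa [cosh_eq] using cosh_le_exp_half_sq u
  nlinarith [mul_le_mul_of_nonneg_left h₁ hα.1,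
    mul_le_mul_of_nonneg_left h₀ (sub_nonneg.2 hα.2)]

lemma sum_bernoulliWeight_mul_exp_le (hα : α ∈ Set.Icc 0 1) (s : ι → ℝ) (l : ℝ) :
    ∑ g : ι → Bool, bernoulliWeight α g * exp (l * centeredSum α s g)
      ≤ exp (l ^ 2 * (∑ i, s i ^ 2) / 2) := by
  have hfactor : ∀ g : ι → Bool, bernoulliWeight α g * exp (l * centeredSum α s g)
      = ∏ i, (if g i then α else 1 - α) * exp (l * (s i * ((if g i then 1 else 0) - α))) := by
    intro g
    rw [bernoulliWeight, centeredSum, mul_sum, exp_sum, prod_mul_distrib]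
  simp_rw [hfactor]
  rw [← Fintype.prod_sum (fun i (b : Bool) =>
    (if b then α else 1 - α) * exp (l * (s i * ((if b then 1 else 0) - α)))), mul_sum, sum_div,
    exp_sum]
  refine prod_le_prod (fun i _ => ?_) (fun i _ => ?_)
  · exact Fintype.sum_nonneg fun b => mul_nonneg (by split_ifs <;> linarith [hα.1, hα.2])
      (exp_nonneg _)
  · have := bernoulli_mgf_le hα (l * s i)
    simp only [Fintype.sum_bool, if_true, Bool.false_eq_true, if_false]
    calc _ = α * exp (l * s i * (1 - α)) + (1 - α) * exp (-(l * s i * α)) := by ring_nf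
      _ ≤ exp ((l * s i) ^ 2 / 2) := this
      _ = _ := by ring_nf

lemma sum_filter_ge_le_exp_mul_sum_mul_exp {Ω : Type*} [Fintype Ω] (w X : Ω → ℝ)
    (hw : ∀ x, 0 ≤ w x) (t l : ℝ) (hl : 0 ≤ l) :
    ∑ x ∈ univ.filter (fun x => t ≤ X x), w x
      ≤ exp (-(l * t)) * ∑ x, w x * exp (l * X x) := by
  rw [mul_sum, sum_filter]
  refine sum_le_sum fun x _ => ?_
  split_ifs with hx
  · have : 1 ≤ exp (-(l * t)) * exp (l * X x) := by
      rw [← exp_add]; exact one_le_exp (by nlinarith)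
    nlinarith [hw x]
  · exact mul_nonneg (exp_nonneg _) (mul_nonneg (hw x) (exp_nonneg _))

lemma sum_bernoulliWeight_centeredSum_ge_le (hα : α ∈ Set.Icc 0 1) (s : ι → ℝ) {t V : ℝ}
    (ht : 0 ≤ t) (hV : ∑ i, s i ^ 2 ≤ V) :
    ∑ g ∈ univ.filter (fun g => t ≤ centeredSum α s g), bernoulliWeight α g
      ≤ exp (-t ^ 2 / (2 * V)) := by
  have hV₀ : 0 ≤ V := (sum_nonneg fun i _ => sq_nonneg (s i)).trans hV
  -- Chernoff's bound at the optimal exponent `l = t / V`.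
  have hl : 0 ≤ t / V := div_nonneg ht hV₀
  refine (sum_filter_ge_le_exp_mul_sum_mul_exp _ _ (bernoulliWeight_nonneg hα) t _ hl).trans ?_
  refine (mul_le_mul_of_nonneg_left (sum_bernoulliWeight_mul_exp_le hα s _)
    (exp_nonneg _)).trans ?_
  rw [← exp_add, exp_le_exp]
  rcases hV₀.eq_or_lt with rfl | hV₀
  · simp
  · calc -(t / V * t) + (t / V) ^ 2 * (∑ i, s i ^ 2) / 2
        ≤ -(t / V * t) + (t / V) ^ 2 * V / 2 := by gcongr
      _ = -t ^ 2 / (2 * V) := by field_simp; ring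

lemma sum_bernoulliWeight_abs_centeredSum_ge_le (hα : α ∈ Set.Icc 0 1) (s : ι → ℝ)
    {t V : ℝ} (ht : 0 ≤ t) (hV : ∑ i, s i ^ 2 ≤ V) :
    ∑ g ∈ univ.filter (fun g => t ≤ |centeredSum α s g|), bernoulliWeight α g
      ≤ 2 * exp (-t ^ 2 / (2 * V)) := by
  have hV' : ∑ i, (-s) i ^ 2 ≤ V := by simpa using hV
  calc ∑ g ∈ univ.filter (fun g => t ≤ |centeredSum α s g|), bernoulliWeight α g
      ≤ ∑ g ∈ univ.filter (fun g => t ≤ centeredSum α s g), bernoulliWeight α g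
        + ∑ g ∈ univ.filter (fun g => t ≤ centeredSum α (-s) g), bernoulliWeight α g := by
        simp only [sum_filter, centeredSum_neg, ← sum_add_distrib]
        refine sum_le_sum fun g _ => ?_
        have := bernoulliWeight_nonneg hα g
        split_ifs with h₁ <;> (try rcases le_abs.1 h₁ with h | h) <;> linarith
    _ ≤ 2 * exp (-t ^ 2 / (2 * V)) := by
        rw [two_mul]
        exact add_le_add (sum_bernoulliWeight_centeredSum_ge_le hα s ht hV)
          (sum_bernoulliWeight_centeredSum_ge_le hα (-s) ht hV')

end BernoulliProduct

noncomputable section ClusterColoring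

variable {V : Type*} [DecidableEq V] (ω : Conf V)

def clusterColoring (g : (graphOf ω).ConnectedComponent → Bool) : V → Bool :=
  fun x => g ((graphOf ω).connectedComponentMk x)

lemma clusterColoring_injective : Function.Injective (clusterColoring ω) := by
  intro g₁ g₂ h
  funext C
  obtain ⟨x, rfl⟩ := C.exists_rep
  exact congrFun h x

lemma mem_range_clusterColoring {c : V → Bool} (hc : constOnClusters ω c) :
    c ∈ Set.range (clusterColoring ω) :=
  ⟨fun C => c C.out,
    funext fun _ => hc _ _ (SimpleGraph.ConnectedComponent.exact (Quot.out_eq _))⟩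

lemma constOnClusters_clusterColoring (g : (graphOf ω).ConnectedComponent → Bool) :
    constOnClusters ω (clusterColoring ω g) := fun _ _ h => by
  simp only [clusterColoring, SimpleGraph.ConnectedComponent.sound h]

variable [Fintype V]

def clusterCard (C : (graphOf ω).ConnectedComponent) : ℕ :=
  #{x | (graphOf ω).connectedComponentMk x = C}

lemma sum_comp_connectedComponentMk {R : Type*} [AddCommMonoid R]
    (f : (graphOf ω).ConnectedComponent → R) :
    ∑ x, f ((graphOf ω).connectedComponentMk x) = ∑ C, clusterCard ω C • f C := by
  rw [sum_comp, image_univ_of_surjective fun C => C.exists_rep]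
  rfl

lemma sum_clusterCard : ∑ C, (clusterCard ω C : ℝ) = Fintype.card V := by
  simpa using (sum_comp_connectedComponentMk ω (fun _ => (1 : ℝ))).symm

lemma clusterSize_eq_clusterCard (x : V) :
    clusterSize ω x = clusterCard ω ((graphOf ω).connectedComponentMk x) := by
  rw [clusterSize, clusterCard, ← Nat.card_eq_finsetCard]
  congr! 3
  simp [SimpleGraph.ConnectedComponent.eq, SimpleGraph.reachable_comm]

lemma SMcard_eq_sum_clusterCard (M : ℝ) :
    SMcard ω M = ∑ C, if M < clusterCard ω C then clusterCard ω C else 0 := by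
  rw [SMcard, card_filter]
  simp_rw [clusterSize_eq_clusterCard]
  rw [sum_comp_connectedComponentMk ω (fun C => if (clusterCard ω C : ℝ) > M then 1 else 0)]
  simp [gt_iff_lt]

lemma card_redSet_clusterColoring_sub (α : ℝ) (g : (graphOf ω).ConnectedComponent → Bool) :
    ((redSet (clusterColoring ω g)).card : ℝ) - α * Fintype.card V
      = centeredSum α (fun C => (clusterCard ω C : ℝ)) g := by
  rw [redSet, card_filter, Nat.cast_sum, ← sum_clusterCard]
  unfold clusterColoring
  rw [sum_comp_connectedComponentMk ω (fun C => ((if g C = true then 1 else 0 : ℕ) : ℝ))]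
  simp only [centeredSum, mul_sub, sum_sub_distrib, mul_sum, nsmul_eq_mul]
  congr 1
  · refine sum_congr rfl fun C _ => by split_ifs <;> simp
  · exact sum_congr rfl fun C _ => by ring

lemma numClustersIn_clusterColoring (g : (graphOf ω).ConnectedComponent → Bool) (b : Bool) :
    numClustersIn ω {x | clusterColoring ω g x = b} = #{C | g C = b} := by
  rw [numClustersIn, ← Nat.card_eq_finsetCard]
  congr! 2
  ext C
  simp only [clusterColoring, Set.mem_ofPred_eq, mem_filter, mem_univ, true_and]
  constructor
  · rintro ⟨x, hx, rfl⟩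
    exact hx
  · intro h
    obtain ⟨x, rfl⟩ := C.exists_rep
    exact ⟨x, h, rfl⟩

lemma colorWeight_clusterColoring (α : ℝ) (g : (graphOf ω).ConnectedComponent → Bool) :
    colorWeight ω α (clusterColoring ω g) = bernoulliWeight α g := by
  rw [colorWeight, if_pos (constOnClusters_clusterColoring ω g),
    numClustersIn_clusterColoring, numClustersIn_clusterColoring, bernoulliWeight, prod_ite,
    prod_const, prod_const]
  simp

lemma probOf_colorWeight (α : ℝ) (A : Set (V → Bool)) :
    probOf (colorWeight ω α) A
      = ∑ g ∈ univ.filter (fun g => clusterColoring ω g ∈ A), bernoulliWeight α g := by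
  have hpush : ∀ A : Set (V → Bool), ∑ c ∈ univ.filter (· ∈ A), colorWeight ω α c
      = ∑ g ∈ univ.filter (fun g => clusterColoring ω g ∈ A), bernoulliWeight α g := by
    intro A
    rw [sum_filter, sum_filter]
    refine (Fintype.sum_of_injective _ (clusterColoring_injective ω) _ _ (fun c hc => ?_)
      fun g => by rw [colorWeight_clusterColoring]).symm
    rw [colorWeight, if_neg (mt (mem_range_clusterColoring ω) hc)]
    simp
  have htotal : ∑ c, colorWeight ω α c = 1 := by
    simpa [sum_bernoulliWeight] using hpush Set.univ
  rw [probOf, hpush, htotal, div_one]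

def smallClusterCard (M : ℝ) (C : (graphOf ω).ConnectedComponent) : ℝ :=
  if (clusterCard ω C : ℝ) ≤ M then clusterCard ω C else 0

lemma sum_abs_clusterCard_sub_smallClusterCard (M : ℝ) :
    ∑ C, |(clusterCard ω C : ℝ) - smallClusterCard ω M C| = SMcard ω M := by
  rw [SMcard_eq_sum_clusterCard, Nat.cast_sum]
  refine sum_congr rfl fun C _ => ?_
  rcases le_or_gt (clusterCard ω C : ℝ) M with h | h
  · simp [smallClusterCard, h, not_lt.2 h]
  · simp [smallClusterCard, h, not_le.2 h]

lemma sum_smallClusterCard_sq_le (M : ℝ) :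
    ∑ C, smallClusterCard ω M C ^ 2 ≤ Fintype.card V * M ^ 2 := by
  have hcard : Fintype.card (graphOf ω).ConnectedComponent ≤ Fintype.card V :=
    Fintype.card_le_of_surjective _ fun C => C.exists_rep
  calc ∑ C, smallClusterCard ω M C ^ 2 ≤ ∑ _C : (graphOf ω).ConnectedComponent, M ^ 2 := by
        refine sum_le_sum fun C _ => ?_
        unfold smallClusterCard
        split_ifs with h
        · exact pow_le_pow_left₀ (Nat.cast_nonneg _) h 2
        · simpa using sq_nonneg M
    _ ≤ Fintype.card V * M ^ 2 := by
        rw [sum_const, card_univ, nsmul_eq_mul]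
        gcongr

lemma abs_card_redSet_sub_le (M : ℝ) {α : ℝ} (hα : α ∈ Set.Icc 0 1)
    (g : (graphOf ω).ConnectedComponent → Bool) :
    |((redSet (clusterColoring ω g)).card : ℝ) - α * Fintype.card V|
      ≤ |centeredSum α (smallClusterCard ω M) g| + SMcard ω M := by
  rw [card_redSet_clusterColoring_sub, ← sum_abs_clusterCard_sub_smallClusterCard]
  have := abs_centeredSum_sub_le hα (fun C => (clusterCard ω C : ℝ)) (smallClusterCard ω M) g
  linarith [abs_sub_abs_le_abs_sub (centeredSum α (fun C => (clusterCard ω C : ℝ)) g)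
    (centeredSum α (smallClusterCard ω M) g)]

end ClusterColoring

theorem cluster_coloring_hoeffding_general (n : ℕ) (ω : Conf (Fin n)) (M ε : ℝ)
    (hS : (SMcard ω M : ℝ) ≤ ε * n)
    (α : ℝ) (hα : α ∈ Set.Icc (0 : ℝ) 1) (δ : ℝ) (hδ : 0 < δ) :
    probOf (colorWeight ω α) {c | (ε + δ) * n ≤ |((redSet c).card : ℝ) - α * n|}
      ≤ 2 * Real.exp (-δ ^ 2 * n / (2 * M ^ 2)) := by
  rw [probOf_colorWeight]
  calc _ ≤ ∑ g ∈ univ.filter (fun g => δ * n ≤ |centeredSum α (smallClusterCard ω M) g|),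
          bernoulliWeight α g := by
        refine sum_le_sum_of_subset_of_nonneg (fun g hg => ?_)
          fun g _ _ => bernoulliWeight_nonneg hα g
        simp only [mem_filter, mem_univ, true_and, Set.mem_ofPred_eq] at hg ⊢
        have hsplit := abs_card_redSet_sub_le ω M hα g
        rw [Fintype.card_fin] at hsplit
        linarith
    _ ≤ 2 * exp (-(δ * n) ^ 2 / (2 * (n * M ^ 2))) := by
        refine sum_bernoulliWeight_abs_centeredSum_ge_le hα _ (by positivity) ?_
        simpa using sum_smallClusterCard_sq_le ω M
    _ = 2 * exp (-δ ^ 2 * n / (2 * M ^ 2)) := by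
        rcases eq_or_ne (n : ℝ) 0 with hn | hn
        · simp [hn]
        · rw [show 2 * ((n : ℝ) * M ^ 2) = n * (2 * M ^ 2) by ring, ← div_div]
          congr 3
          field_simp

/-- **Lemma 3.2 (Hoeffding for cluster colorings).** Let `ω` be an edge configuration on `n`
vertices with `|S_M(ω)| ≤ εn`.  Color each cluster of `ω` red independently with probability
`α` and let `R` be the set of red vertices.  Then for every `δ > 0`,
`P(||R| - αn| ≥ (ε+δ)n) ≤ 2 exp(-δ²n/(2M²))`. -/
theorem cluster_coloring_hoeffding (n : ℕ) (ω : Conf (Fin n)) (M ε : ℝ)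
    (hM : 0 < M) (hε : 0 < ε) (hS : (SMcard ω M : ℝ) ≤ ε * n)
    (α : ℝ) (hα : α ∈ Set.Icc (0 : ℝ) 1) (δ : ℝ) (hδ : 0 < δ) :
    probOf (colorWeight ω α) {c | (ε + δ) * n ≤ |((redSet c).card : ℝ) - α * n|}
      ≤ 2 * Real.exp (-δ ^ 2 * n / (2 * M ^ 2)) :=
  cluster_coloring_hoeffding_general n ω M ε hS α hα δ hδ
end
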